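/- SAT reduction correctness: for every CNF Boolean formula Φ, Φ is satisfiable if and only if (G_Φ, q0) ⊨_subj ⟨⟨1,2,3⟩⟩ X yes, where G_Φ is the three-agent iCGS built from Φ as follows and q0 is any literal state. -/

import Mathlib

/-- An imperfect-information concurrent game structure (iCGS), given as raw data;
the defining axioms are collected in `iCGS.Valid`. -/
structure iCGS (Ag AP S Act : Type) where
  init : S
  indist : Ag → S → S → Prop
  protocol : Ag → S → Set Act
  trans : S → (Ag → Act) → S → Prop
  label : S → Set AP

namespace iCGS

variable {Ag AP S S' Act Act' : Type}

/-- The axioms of an iCGS. -/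
def Valid (G : iCGS Ag AP S Act) : Prop :=
  (∀ i, Equivalence (G.indist i)) ∧
  (∀ i s, (G.protocol i s).Nonempty) ∧
  (∀ i s s', G.indist i s s' → G.protocol i s = G.protocol i s') ∧
  (∀ s a, (∃ s', G.trans s a s') ↔ ∀ i, a i ∈ G.protocol i s)

/-- Common-knowledge reachability for coalition `A`:
reflexive-transitive closure of the union of the `∼ᵢ`, `i ∈ A`. -/
def ck (G : iCGS Ag AP S Act) (A : Set Ag) : S → S → Prop :=
  Relation.ReflTransGen (fun s s' => ∃ i ∈ A, G.indist i s s')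

/-- Common-knowledge neighbourhood `C_A(q)`. -/
def CKN (G : iCGS Ag AP S Act) (A : Set Ag) (q : S) : Set S := {r | G.ck A q r}

/-- "Everybody knows" neighbourhood `E_A(q)`. -/
def EKN (G : iCGS Ag AP S Act) (A : Set Ag) (q : S) : Set S :=
  {r | ∃ i ∈ A, G.indist i q r}

/-- `σ` is a partial uniform strategy for coalition `A` with domain `Q`. -/
def IsPStrat (G : iCGS Ag AP S Act) (A : Set Ag) (Q : Set S) (σ : Ag → S → Act) : Prop :=
  (∀ i ∈ A, ∀ s ∈ Q, σ i s ∈ G.protocol i s) ∧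
  (∀ i ∈ A, ∀ s ∈ Q, ∀ t ∈ Q, G.indist i s t → σ i s = σ i t)

/-- `σ` is a (total) uniform memoryless strategy for coalition `A`. -/
def IsStrat (G : iCGS Ag AP S Act) (A : Set Ag) (σ : Ag → S → Act) : Prop :=
  G.IsPStrat A Set.univ σ

/-- Successors of `s` under joint actions compatible with `σ` on coalition `A`. -/
def succ (G : iCGS Ag AP S Act) (A : Set Ag) (σ : Ag → S → Act) (s : S) : Set S :=
  {t | ∃ a : Ag → Act, (∀ i ∈ A, a i = σ i s) ∧ G.trans s a t}

/-- Objective outcome set of strategy `σ` at `q` (runs as infinite state sequences). -/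
def OutObj (G : iCGS Ag AP S Act) (A : Set Ag) (σ : Ag → S → Act) (q : S) :
    Set (ℕ → S) :=
  {lam | lam 0 = q ∧ ∀ j, lam (j + 1) ∈ G.succ A σ (lam j)}

/-- Subjective outcome set: union of objective outcomes over states indistinguishable
from `q` for some member of the coalition. -/
def OutSubj (G : iCGS Ag AP S Act) (A : Set Ag) (σ : Ag → S → Act) (q : S) :
    Set (ℕ → S) :=
  {lam | ∃ i ∈ A, ∃ r, G.indist i q r ∧ lam ∈ G.OutObj A σ r}

/-- Outcome set: subjective (`x = true`) or objective (`x = false`).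
(For a nonempty coalition the subjective case coincides with the union of
objective outcomes over indistinguishable states, by reflexivity; for the
empty coalition it degenerates to the objective case.) -/
def Out (G : iCGS Ag AP S Act) (x : Bool) (A : Set Ag) (σ : Ag → S → Act) (q : S) :
    Set (ℕ → S) :=
  if x then G.OutObj A σ q ∪ G.OutSubj A σ q else G.OutObj A σ q

/-- `R` is a simulation for coalition `A` from `G` to `G'` (Def. of simulation):
existence of a strategy simulator over common-knowledge neighbourhoods with
(a) atom agreement, (b) epistemic back-condition, (c) strategy transfer, and
(2) injectivity modulo common-knowledge neighbourhoods. -/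
def IsSimulation (G : iCGS Ag AP S Act) (G' : iCGS Ag AP S' Act') (A : Set Ag)
    (R : S → S' → Prop) : Prop :=
  (∃ ST : Set S → Set S' → (Ag → S → Act) → (Ag → S' → Act'),
    ∀ q q', R q q' →
      (∀ σ, G.IsPStrat A (G.CKN A q) σ →
        G'.IsPStrat A (G'.CKN A q') (ST (G.CKN A q) (G'.CKN A q') σ)) ∧
      (∀ r ∈ G.CKN A q, ∀ r' ∈ G'.CKN A q', R r r' →
        ∀ σ, G.IsPStrat A (G.CKN A q) σ →
          ∀ s' ∈ G'.succ A (ST (G.CKN A q) (G'.CKN A q') σ) r',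
            ∃ s ∈ G.succ A σ r, R s s')) ∧
  (∀ q q', R q q' → G.label q = G'.label q') ∧
  (∀ q q', R q q' → ∀ i ∈ A, ∀ r', G'.indist i q' r' →
    ∃ r, G.indist i q r ∧ R r r') ∧
  (∀ q₁ q₂ q', R q₁ q' → R q₂ q' → G.CKN A q₁ = G.CKN A q₂)

/-- `R` is a bisimulation for `A` iff both `R` and its converse are `A`-simulations. -/
def IsBisimulation (G : iCGS Ag AP S Act) (G' : iCGS Ag AP S' Act') (A : Set Ag)
    (R : S → S' → Prop) : Prop :=
  G.IsSimulation G' A R ∧ G'.IsSimulation G A (fun q' q => R q q')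

end iCGS
mutual
/-- State formulas of ATL*. -/
inductive SF (AP Ag : Type) : Type where
  | atom : AP → SF AP Ag
  | neg : SF AP Ag → SF AP Ag
  | imp : SF AP Ag → SF AP Ag → SF AP Ag
  | coal : Set Ag → PF AP Ag → SF AP Ag
/-- Path formulas of ATL*. -/
inductive PF (AP Ag : Type) : Type where
  | of : SF AP Ag → PF AP Ag
  | neg : PF AP Ag → PF AP Ag
  | imp : PF AP Ag → PF AP Ag → PF AP Ag
  | next : PF AP Ag → PF AP Ag
  | untl : PF AP Ag → PF AP Ag → PF AP Ag
end

variable {Ag AP S Act : Type}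

mutual
/-- Satisfaction of ATL* state formulas; `x = true` is the subjective,
`x = false` the objective imperfect-information memoryless semantics. -/
def SSat (G : iCGS Ag AP S Act) (x : Bool) : S → SF AP Ag → Prop
  | s, .atom p => p ∈ G.label s
  | s, .neg φ => ¬ SSat G x s φ
  | s, .imp φ ψ => SSat G x s φ → SSat G x s ψ
  | s, .coal A ψ =>
      ∃ σ, G.IsStrat A σ ∧ ∀ lam ∈ G.Out x A σ s, PSat G x lam ψ
/-- Satisfaction of ATL* path formulas on runs. -/
def PSat (G : iCGS Ag AP S Act) (x : Bool) : (ℕ → S) → PF AP Ag → Prop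
  | lam, .of φ => SSat G x (lam 0) φ
  | lam, .neg ψ => ¬ PSat G x lam ψ
  | lam, .imp ψ χ => PSat G x lam ψ → PSat G x lam χ
  | lam, .next ψ => PSat G x (fun n => lam (n + 1)) ψ
  | lam, .untl ψ χ => ∃ j, PSat G x (fun n => lam (n + j)) χ ∧
      ∀ k < j, PSat G x (fun n => lam (n + k)) ψ
end

mutual
/-- `φ` is an `A`-formula: `A` is the only coalition occurring in it. -/
def SOnly (A : Set Ag) : SF AP Ag → Prop
  | .atom _ => True
  | .neg φ => SOnly A φ
  | .imp φ ψ => SOnly A φ ∧ SOnly A ψ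
  | .coal B ψ => B = A ∧ POnly A ψ
def POnly (A : Set Ag) : PF AP Ag → Prop
  | .of φ => SOnly A φ
  | .neg ψ => POnly A ψ
  | .imp ψ χ => POnly A ψ ∧ POnly A χ
  | .next ψ => POnly A ψ
  | .untl ψ χ => POnly A ψ ∧ POnly A χ
end

/-- CNF formulas: a list of clauses, each clause a list of literals
(variable index together with a polarity). -/
abbrev CNF := List (List (ℕ × Bool))

/-- Satisfiability of a CNF formula. -/
def CNF.Sat (Φ : CNF) : Prop :=
  ∃ v : ℕ → Bool, ∀ c ∈ Φ, ∃ l ∈ c, v l.1 = l.2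

/-- States of the model `G_Φ`: a literal state `inl (c, l)` for the `l`-th literal
of the `c`-th clause, plus `inr true = q_⊤` (labeled `yes`) and `inr false = q_⊥`. -/
abbrev SatS := (ℕ × ℕ) ⊕ Bool

/-- The `l`-th literal of the `c`-th clause of `Φ`. -/
def litAt (Φ : CNF) (c l : ℕ) : ℕ × Bool := (Φ.getD c []).getD l (0, true)

/-- Protocol: agent `0` (the literal picker) chooses a literal index of the current
clause; agent `1` (the valuation picker) chooses a truth value (`0` or `1`);
agent `2` has a single action. -/
def satProt (Φ : CNF) (i : Fin 3) (s : SatS) : Set ℕ :=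
  match s with
  | Sum.inl (c, _) =>
      if i = 0 then {k | k < max 1 (Φ.getD c []).length}
      else if i = 1 then {0, 1} else {0}
  | Sum.inr _ => if i = 1 then {0, 1} else {0}

/-- Indistinguishability: agent `0` is uniform within clauses, agent `1` per
variable, agent `2` links all literal states. -/
def satInd (Φ : CNF) (i : Fin 3) (s t : SatS) : Prop :=
  match s, t with
  | Sum.inl (c, l), Sum.inl (c', l') =>
      if i = 0 then c = c'
      else if i = 1 then (litAt Φ c l).1 = (litAt Φ c' l').1
      else True
  | Sum.inr b, Sum.inr b' => b = b'
  | _, _ => False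

/-- Transition function: at literal state `(c, l)`, if agent `0` picks a wrong
literal index, or picks `l` and agent `1`'s valuation makes the literal true,
go to `q_⊤`; otherwise go to the sink `q_⊥`. `q_⊤` and `q_⊥` are absorbing.
(Out-of-range literal states behave like `q_⊤`-predecessors.) -/
def satDelta (Φ : CNF) (s : SatS) (a : Fin 3 → ℕ) : SatS :=
  match s with
  | Sum.inl (c, l) =>
      if Φ.length ≤ c ∨ (Φ.getD c []).length ≤ l then Sum.inr true
      else if a 0 ≠ l then Sum.inr true
      else if decide (a 1 = 1) = (litAt Φ c l).2 then Sum.inr true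
      else Sum.inr false
  | Sum.inr b => Sum.inr b

/-- The three-agent iCGS `G_Φ` built from a CNF formula `Φ`, with a single atom
`yes` holding exactly at `q_⊤`. -/
def GPhi (Φ : CNF) : iCGS (Fin 3) Unit SatS ℕ where
  init := Sum.inl (0, 0)
  indist := satInd Φ
  protocol := satProt Φ
  trans := fun s a t => (∀ i, a i ∈ satProt Φ i s) ∧ t = satDelta Φ s a
  label := fun s => {_u | s = Sum.inr true}

/-! Under the subjective semantics the grand coalition has to win from every state that some
agent confuses with `q₀`, and agent 2 confuses all literal states: so `⟨⟨1,2,3⟩⟩X yes` holds iff a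
single uniform strategy sends every literal state to `q_⊤`. Uniformity of agent 1 per variable
turns its choices into a valuation, and uniformity of agent 0 per clause makes it commit to one
literal of each clause; at that literal's state the move reaches `q_⊤` exactly when the
valuation makes the literal true. Winning strategies and satisfying valuations thus correspond. -/

namespace iCGS

variable {Ag AP S Act : Type} (G : iCGS Ag AP S Act)

theorem succ_univ (σ : Ag → S → Act) (s : S) :
    G.succ Set.univ σ s = {t | G.trans s (fun i => σ i s) t} := by
  ext t
  constructor
  · rintro ⟨a, ha, ht⟩
    rwa [show a = fun i => σ i s from funext fun i => ha i trivial] at ht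
  · exact fun ht => ⟨_, fun _ _ => rfl, ht⟩

theorem Out_true_eq (A : Set Ag) (σ : Ag → S → Act) (q : S) :
    G.Out true A σ q = ⋃ r ∈ insert q (G.EKN A q), G.OutObj A σ r := by
  ext lam
  simp only [Out, OutSubj, EKN, if_true, Set.mem_union, Set.mem_ofPred_eq, Set.mem_iUnion,
    Set.mem_insert_iff, exists_prop]
  constructor
  · rintro (h | ⟨i, hi, r, hr, h⟩)
    · exact ⟨q, Or.inl rfl, h⟩
    · exact ⟨r, Or.inr ⟨i, hi, hr⟩, h⟩
  · rintro ⟨r, rfl | ⟨i, hi, hr⟩, h⟩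
    · exact Or.inl h
    · exact Or.inr ⟨i, hi, r, hr, h⟩

variable {G} {A : Set Ag} {σ : Ag → S → Act}

theorem exists_mem_OutObj (hσ : ∀ s, (G.succ A σ s).Nonempty) (r : S) :
    ∃ lam, lam ∈ G.OutObj A σ r := by
  choose next hnext using hσ
  exact ⟨fun n => next^[n] r, rfl, fun j => by
    simpa only [Function.iterate_succ_apply'] using hnext _⟩

theorem forall_OutObj_next_iff (hσ : ∀ s, (G.succ A σ s).Nonempty) (r : S) (P : S → Prop) :
    (∀ lam ∈ G.OutObj A σ r, P (lam 1)) ↔ ∀ t ∈ G.succ A σ r, P t := by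
  constructor
  · intro h t ht
    obtain ⟨lam, hlam0, hlam⟩ := exists_mem_OutObj hσ t
    rw [← hlam0]
    refine h (fun n => Nat.casesOn n r lam) ⟨rfl, fun j => ?_⟩
    cases j with
    | zero => simpa [hlam0] using ht
    | succ j => exact hlam j
  · rintro h lam ⟨rfl, hlam⟩
    exact h _ (hlam 0)

end iCGS

theorem SSat_true_coal_univ_next_atom_iff {Ag AP S Act : Type} (G : iCGS Ag AP S Act)
    (hG : ∀ s a, (∀ i, a i ∈ G.protocol i s) → ∃ t, G.trans s a t) (p : AP) (q : S) :
    SSat G true q (SF.coal Set.univ (PF.next (PF.of (SF.atom p)))) ↔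
      ∃ σ, G.IsStrat Set.univ σ ∧
        ∀ r ∈ insert q (G.EKN Set.univ q), ∀ t, G.trans r (fun i => σ i r) t → p ∈ G.label t := by
  simp only [SSat, PSat, iCGS.Out_true_eq, Set.mem_iUnion]
  refine exists_congr fun σ => and_congr_right fun hσ => ?_
  have hsucc : ∀ s, (G.succ Set.univ σ s).Nonempty := fun s => by
    rw [iCGS.succ_univ]
    exact hG s _ fun i => hσ.1 i trivial s trivial
  simp only [exists_prop, forall_exists_index, and_imp, zero_add]
  rw [forall_comm]
  refine forall_congr' fun r => ?_
  rw [forall_comm, forall_congr' fun _ => iCGS.forall_OutObj_next_iff hsucc r (p ∈ G.label ·),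
    G.succ_univ]
  rfl

theorem GPhi_insert_EKN_inl (Φ : CNF) (c l : ℕ) :
    insert (Sum.inl (c, l)) ((GPhi Φ).EKN Set.univ (Sum.inl (c, l))) = Set.range Sum.inl := by
  ext (⟨c', l'⟩ | b)
  · simpa [iCGS.EKN, GPhi, satInd] using ⟨2, by simp⟩
  · simp [iCGS.EKN, GPhi, satInd]

def WinsAtLiterals (Φ : CNF) (σ : Fin 3 → SatS → ℕ) : Prop :=
  ∀ c l, satDelta Φ (Sum.inl (c, l)) (fun i => σ i (Sum.inl (c, l))) = Sum.inr true

theorem GPhi_SSat_next_yes_iff (Φ : CNF) (c l : ℕ) :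
    SSat (GPhi Φ) true (Sum.inl (c, l)) (SF.coal Set.univ (PF.next (PF.of (SF.atom ())))) ↔
      ∃ σ, (GPhi Φ).IsStrat Set.univ σ ∧ WinsAtLiterals Φ σ := by
  rw [SSat_true_coal_univ_next_atom_iff (GPhi Φ) (fun _ _ ha => ⟨_, ha, rfl⟩),
    GPhi_insert_EKN_inl]
  refine exists_congr fun σ => and_congr_right fun hσ => ?_
  have hprot : ∀ s i, σ i s ∈ satProt Φ i s := fun s i => hσ.1 i trivial s trivial
  simp [WinsAtLiterals, GPhi, hprot]

theorem satDelta_inl_eq_true_iff {Φ : CNF} {c l : ℕ} (hc : c < Φ.length)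
    (hl : l < (Φ.getD c []).length) (a : Fin 3 → ℕ) :
    satDelta Φ (Sum.inl (c, l)) a = Sum.inr true ↔
      (a 0 = l → decide (a 1 = 1) = (litAt Φ c l).2) := by
  simp only [satDelta, hc.not_ge, hl.not_ge, or_self, if_false]
  split_ifs <;> simp_all

theorem satDelta_inl_of_not_lt {Φ : CNF} {c l : ℕ}
    (h : ¬ (c < Φ.length ∧ l < (Φ.getD c []).length)) (a : Fin 3 → ℕ) :
    satDelta Φ (Sum.inl (c, l)) a = Sum.inr true := by
  rw [satDelta, if_pos (by omega)]

-- Agent 0 picks the first literal of the clause that `v` makes true (`findIdx` returns the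
-- length of the list when there is none, hence the satisfiability hypothesis below).
def valuationStrat (Φ : CNF) (v : ℕ → Bool) (i : Fin 3) : SatS → ℕ
  | Sum.inl (c, l) =>
      if i = 0 then (Φ.getD c []).findIdx (fun lit => v lit.1 == lit.2)
      else if i = 1 then (v (litAt Φ c l).1).toNat else 0
  | Sum.inr _ => 0

section valuationStrat

variable {Φ : CNF} {v : ℕ → Bool} (hv : ∀ c ∈ Φ, ∃ l ∈ c, v l.1 = l.2)
include hv

theorem findIdx_lt_length_getD (c : ℕ) (hc : c < Φ.length) :
    (Φ.getD c []).findIdx (fun lit => v lit.1 == lit.2) < (Φ.getD c []).length := by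
  have hmem : Φ.getD c [] ∈ Φ := by
    rw [List.getD_eq_getElem _ _ hc]
    exact List.getElem_mem hc
  obtain ⟨lit, hlit, hvlit⟩ := hv _ hmem
  exact List.findIdx_lt_length_of_exists ⟨lit, hlit, by simpa using hvlit⟩

theorem valuationStrat_isStrat : (GPhi Φ).IsStrat Set.univ (valuationStrat Φ v) := by
  refine ⟨fun i _ s _ => ?_, fun i _ s _ t _ hst => ?_⟩
  · rcases s with ⟨c, l⟩ | b
    · fin_cases i
      · show _ < max 1 _
        by_cases hc : c < Φ.length
        · exact (findIdx_lt_length_getD hv c hc).trans_le (le_max_right _ _)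
        · simp only [valuationStrat, List.getD_eq_default _ _ (not_lt.1 hc)]
          simp
      · cases v (litAt Φ c l).1 <;> simp [valuationStrat, GPhi, satProt]
      · simp [valuationStrat, GPhi, satProt]
    · fin_cases i <;> simp [valuationStrat, GPhi, satProt]
  · rcases s with ⟨c, l⟩ | b <;> rcases t with ⟨c', l'⟩ | b'
    · fin_cases i <;> simp_all [GPhi, satInd, valuationStrat]
    all_goals simp_all [GPhi, satInd, valuationStrat]

theorem valuationStrat_wins : WinsAtLiterals Φ (valuationStrat Φ v) := by
  intro c l
  by_cases h : c < Φ.length ∧ l < (Φ.getD c []).length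
  · rw [satDelta_inl_eq_true_iff h.1 h.2]
    intro hpick
    have htrue := List.findIdx_getElem (w := findIdx_lt_length_getD hv c h.1)
    simp only [valuationStrat, if_pos] at hpick
    simp only [hpick] at htrue
    have hlit : litAt Φ c l = (Φ.getD c [])[l] := List.getD_eq_getElem _ _ h.2
    show decide ((v (litAt Φ c l).1).toNat = 1) = (litAt Φ c l).2
    simpa [hlit] using htrue
  · exact satDelta_inl_of_not_lt h _

end valuationStrat

-- A variable gets agent 1's choice at some literal state of it; by uniformity any one will do.
noncomputable def strategyValuation (Φ : CNF) (σ : Fin 3 → SatS → ℕ) (n : ℕ) : Bool :=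
  decide (σ 1 (Sum.inl (Function.invFun (fun p : ℕ × ℕ => (litAt Φ p.1 p.2).1) n)) = 1)

theorem strategyValuation_litAt {Φ : CNF} {σ : Fin 3 → SatS → ℕ}
    (hσ : (GPhi Φ).IsStrat Set.univ σ) (c l : ℕ) :
    strategyValuation Φ σ (litAt Φ c l).1 = decide (σ 1 (Sum.inl (c, l)) = 1) := by
  refine congrArg (decide <| · = 1) (hσ.2 1 trivial _ trivial _ trivial ?_)
  exact Function.invFun_eq (f := fun p : ℕ × ℕ => (litAt Φ p.1 p.2).1) ⟨(c, l), rfl⟩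

theorem sat_of_isStrat_of_wins {Φ : CNF} (hcl : ∀ c ∈ Φ, c ≠ []) {σ : Fin 3 → SatS → ℕ}
    (hσ : (GPhi Φ).IsStrat Set.univ σ) (hwin : WinsAtLiterals Φ σ) : Φ.Sat := by
  refine ⟨strategyValuation Φ σ, fun ψ hψ => ?_⟩
  obtain ⟨c, hc, rfl⟩ := List.getElem_of_mem hψ
  have hclause : Φ.getD c [] = Φ[c] := List.getD_eq_getElem _ _ hc
  set l := σ 0 (Sum.inl (c, 0))
  have hl : l < Φ[c].length := by
    have hprot := hσ.1 0 trivial (Sum.inl (c, 0)) trivial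
    have hpos := List.length_pos_iff.2 (hcl _ hψ)
    simp only [GPhi, satProt, if_pos, hclause] at hprot
    exact lt_of_lt_of_le hprot (max_le hpos le_rfl)
  have hpick : σ 0 (Sum.inl (c, l)) = l := hσ.2 0 trivial _ trivial _ trivial rfl
  have hlit : litAt Φ c l = Φ[c][l] := by rw [litAt, hclause, List.getD_eq_getElem _ _ hl]
  have hvalue := (satDelta_inl_eq_true_iff hc (hclause ▸ hl) _).1 (hwin c l) hpick
  refine ⟨Φ[c][l], List.getElem_mem hl, ?_⟩
  rw [← hlit, strategyValuation_litAt hσ, hvalue]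

/-- correctness of the SAT reduction: `Φ` is satisfiable iff
`(G_Φ, q₀) ⊨_subj ⟨⟨1,2,3⟩⟩ X yes`, where `q₀` is the first literal state. -/
theorem sat_reduction_correct (Φ : CNF) (hne : Φ ≠ []) (hcl : ∀ c ∈ Φ, c ≠ []) :
    Φ.Sat ↔
    SSat (GPhi Φ) true (Sum.inl (0, 0))
      (SF.coal Set.univ (PF.next (PF.of (SF.atom ())))) := by
  rw [GPhi_SSat_next_yes_iff]
  constructor
  · rintro ⟨v, hv⟩
    exact ⟨valuationStrat Φ v, valuationStrat_isStrat hv, valuationStrat_wins hv⟩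
  · rintro ⟨σ, hσ, hwin⟩
    exact sat_of_isStrat_of_wins hcl hσ hwin
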